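/- arXiv:1812.02004 — 2 statements merged into one kernel-verified Lean document; each statement's English description precedes it below -/
import Mathlib

section
/- Lower bound of the LMC–Rényi complexity: let ρ : ℝ → ℝ be a probability density and let p < q with p, q ≠ 1 be such that 0 < W_p[ρ] < ∞ and 0 < W_q[ρ] < ∞. Then R_p[ρ] ≥ R_q[ρ], equivalently C_{p,q}[ρ] ≥ 1. If moreover ρ is a uniform density (a.e. constant equal to 1/a on an interval of length a > 0 and 0 outside), then C_{p,q}[ρ] = 1. -/
open MeasureTheory Set

/-!
By Hölder's inequality `t ↦ log ∫ ρ ^ t` (over the support of `ρ`) is convex in `t`, and it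
vanishes at `t = 1` because `ρ` is normalised. The Rényi entropy `R_t` is minus the slope of the
secant of this convex function between `1` and `t`, hence antitone in `t`, which gives
`R_q ≤ R_p`. For the uniform density on an interval of length `a` one has `W_t = a ^ (1 - t)`,
so `R_t = log a` for every `t ≠ 1`.
-/

section RenyiEntropy

variable {α : Type*} [MeasurableSpace α] {μ : Measure α}

theorem integral_pos_of_ae_pos [NeZero μ] {f : α → ℝ} (hf : ∀ᵐ x ∂μ, 0 < f x)
    (hfi : Integrable f μ) : 0 < ∫ x, f x ∂μ := by
  refine (integral_pos_iff_support_of_nonneg_ae (hf.mono fun _ h => h.le) hfi).2 ?_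
  have hsupp : Function.support f =ᵐ[μ] univ :=
    ae_eq_univ.2 (ae_iff.1 (hf.mono fun _ h => h.ne'))
  rw [measure_congr hsupp]
  exact Measure.measure_univ_pos.2 (NeZero.ne μ)

theorem MeasureTheory.Integrable.rpow_mul_rpow {F G : α → ℝ} (hF : 0 ≤ᵐ[μ] F) (hG : 0 ≤ᵐ[μ] G)
    (hFi : Integrable F μ) (hGi : Integrable G μ) {s t : ℝ} (hs : 0 ≤ s) (ht : 0 ≤ t)
    (hst : s + t = 1) : Integrable (fun x => F x ^ s * G x ^ t) μ := by
  refine ((hFi.const_mul s).add (hGi.const_mul t)).mono' ?_ ?_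
  · exact ((hFi.aemeasurable.pow_const s).mul (hGi.aemeasurable.pow_const t)).aestronglyMeasurable
  · filter_upwards [hF, hG] with x hFx hGx
    rw [Real.norm_of_nonneg (mul_nonneg (Real.rpow_nonneg hFx s) (Real.rpow_nonneg hGx t))]
    exact Real.geom_mean_le_arith_mean2_weighted hs ht hFx hGx hst

theorem integral_rpow_mul_rpow_le {F G : α → ℝ} (hF : 0 ≤ᵐ[μ] F) (hG : 0 ≤ᵐ[μ] G)
    (hFi : Integrable F μ) (hGi : Integrable G μ) {s t : ℝ} (hs : 0 ≤ s) (ht : 0 ≤ t)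
    (hst : s + t = 1) :
    ∫ x, F x ^ s * G x ^ t ∂μ ≤ (∫ x, F x ∂μ) ^ s * (∫ x, G x ∂μ) ^ t := by
  have hFG : 0 ≤ᵐ[μ] fun x => F x ^ s * G x ^ t := by
    filter_upwards [hF, hG] with x hFx hGx
    exact mul_nonneg (Real.rpow_nonneg hFx s) (Real.rpow_nonneg hGx t)
  have hF₀ := integral_nonneg_of_ae hF
  have hG₀ := integral_nonneg_of_ae hG
  rw [← ENNReal.ofReal_le_ofReal_iff
      (mul_nonneg (Real.rpow_nonneg hF₀ s) (Real.rpow_nonneg hG₀ t)),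
    ofReal_integral_eq_lintegral_ofReal (hFi.rpow_mul_rpow hF hG hGi hs ht hst) hFG,
    ENNReal.ofReal_mul (Real.rpow_nonneg hF₀ s),
    ← ENNReal.ofReal_rpow_of_nonneg hF₀ hs,
    ← ENNReal.ofReal_rpow_of_nonneg hG₀ ht,
    ofReal_integral_eq_lintegral_ofReal hFi hF, ofReal_integral_eq_lintegral_ofReal hGi hG]
  calc ∫⁻ x, ENNReal.ofReal (F x ^ s * G x ^ t) ∂μ
      = ∫⁻ x, ENNReal.ofReal (F x) ^ s * ENNReal.ofReal (G x) ^ t ∂μ := by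
        refine lintegral_congr_ae ?_
        filter_upwards [hF, hG] with x hFx hGx
        rw [ENNReal.ofReal_mul (Real.rpow_nonneg hFx s), ENNReal.ofReal_rpow_of_nonneg hFx hs,
          ENNReal.ofReal_rpow_of_nonneg hGx ht]
    _ ≤ _ := ENNReal.lintegral_mul_norm_pow_le hFi.aemeasurable.ennreal_ofReal
        hGi.aemeasurable.ennreal_ofReal hs ht hst

theorem convexOn_log_integral_rpow [NeZero μ] {f : α → ℝ} (hf : ∀ᵐ x ∂μ, 0 < f x) :
    ConvexOn ℝ {t : ℝ | Integrable (fun x => f x ^ t) μ}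
      (fun t : ℝ => Real.log (∫ x, f x ^ t ∂μ)) := by
  have hsplit : ∀ a b t u : ℝ, (fun x => f x ^ (a • t + b • u))
      =ᵐ[μ] fun x => (f x ^ t) ^ a * (f x ^ u) ^ b := by
    intro a b t u
    filter_upwards [hf] with x hx
    rw [smul_eq_mul, smul_eq_mul, Real.rpow_add hx, ← Real.rpow_mul hx.le,
      ← Real.rpow_mul hx.le, mul_comm a, mul_comm b]
  have hpow : ∀ t : ℝ, 0 ≤ᵐ[μ] fun x => f x ^ t := fun t =>
    hf.mono fun x hx => Real.rpow_nonneg hx.le t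
  refine ⟨?_, ?_⟩
  · intro t ht u hu a b ha hb hab
    exact (ht.rpow_mul_rpow (hpow t) (hpow u) hu ha hb hab).congr (hsplit a b t u).symm
  · intro t ht u hu a b ha hb hab
    have hWt := integral_pos_of_ae_pos (hf.mono fun x hx => Real.rpow_pos_of_pos hx t) ht
    have hWu := integral_pos_of_ae_pos (hf.mono fun x hx => Real.rpow_pos_of_pos hx u) hu
    have hWtu : 0 < ∫ x, f x ^ (a • t + b • u) ∂μ :=
      integral_pos_of_ae_pos (hf.mono fun x hx => Real.rpow_pos_of_pos hx _)
        ((ht.rpow_mul_rpow (hpow t) (hpow u) hu ha hb hab).congr (hsplit a b t u).symm)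
    calc Real.log (∫ x, f x ^ (a • t + b • u) ∂μ)
        ≤ Real.log ((∫ x, f x ^ t ∂μ) ^ a * (∫ x, f x ^ u ∂μ) ^ b) := by
          refine Real.log_le_log hWtu ?_
          rw [integral_congr_ae (hsplit a b t u)]
          exact integral_rpow_mul_rpow_le (hpow t) (hpow u) ht hu ha hb hab
      _ = a • Real.log (∫ x, f x ^ t ∂μ) + b • Real.log (∫ x, f x ^ u ∂μ) := by
          rw [Real.log_mul (Real.rpow_pos_of_pos hWt a).ne' (Real.rpow_pos_of_pos hWu b).ne',
            Real.log_rpow hWt, Real.log_rpow hWu, smul_eq_mul, smul_eq_mul]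

noncomputable def renyiEntropy (μ : Measure α) (f : α → ℝ) (t : ℝ) : ℝ :=
  1 / (1 - t) * Real.log (∫ x, f x ^ t ∂μ)

theorem renyiEntropy_le_of_le {f : α → ℝ} (hf : ∀ᵐ x ∂μ, 0 < f x) (hnorm : ∫ x, f x ∂μ = 1)
    {p q : ℝ} (hp : p ≠ 1) (hq : q ≠ 1) (hpq : p ≤ q)
    (hfp : Integrable (fun x => f x ^ p) μ) (hfq : Integrable (fun x => f x ^ q) μ) :
    renyiEntropy μ f q ≤ renyiEntropy μ f p := by
  have : NeZero μ := ⟨by rintro rfl; simp at hnorm⟩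
  have hf1 : Integrable (fun x => f x ^ (1 : ℝ)) μ := by
    simpa using Integrable.of_integral_ne_zero (hnorm.trans_ne one_ne_zero)
  have hslope := (convexOn_log_integral_rpow hf).secant_mono (a := 1) hf1 hfp hfq hp hq hpq
  simp only [Real.rpow_one, hnorm, Real.log_one, sub_zero] at hslope
  have hR_eq_neg_slope :
      ∀ t, t ≠ 1 → renyiEntropy μ f t = -(Real.log (∫ x, f x ^ t ∂μ) / (t - 1)) := by
    intro t ht
    rw [renyiEntropy, ← neg_sub t 1, div_neg, neg_mul, one_div_mul_eq_div]
  rw [hR_eq_neg_slope p hp, hR_eq_neg_slope q hq]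
  exact neg_le_neg hslope

theorem integral_support_rpow_of_ae_eq_indicator {ρ : α → ℝ} {A : Set α} (hA : MeasurableSet A)
    {c : ℝ} (hc : c ≠ 0) (hρ : ρ =ᵐ[μ] A.indicator fun _ => c) (t : ℝ) :
    ∫ x in Function.support ρ, ρ x ^ t ∂μ = μ.real A * c ^ t := by
  have hsupp : Function.support ρ =ᵐ[μ] A := by
    rw [Filter.eventuallyEq_set]
    filter_upwards [hρ] with x hx
    by_cases hxA : x ∈ A <;> simp [Function.mem_support, hx, hxA, hc]
  rw [setIntegral_congr_set hsupp, ← smul_eq_mul, ← setIntegral_const]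
  refine setIntegral_congr_ae hA ?_
  filter_upwards [hρ] with x hx hxA
  rw [hx, indicator_of_mem hxA]

theorem renyiEntropy_uniform {ρ : ℝ → ℝ} {a x₀ : ℝ} (ha : 0 < a)
    (hρ : ρ =ᵐ[volume] (Ioo x₀ (x₀ + a)).indicator fun _ => 1 / a) {t : ℝ} (ht : t ≠ 1) :
    renyiEntropy (volume.restrict (Function.support ρ)) ρ t = Real.log a := by
  have hW : ∫ x in Function.support ρ, ρ x ^ t = a ^ (1 - t) := by
    rw [integral_support_rpow_of_ae_eq_indicator measurableSet_Ioo (by positivity) hρ,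
      Real.volume_real_Ioo_of_le (by linarith), add_sub_cancel_left, one_div,
      Real.inv_rpow ha.le, Real.rpow_sub ha, Real.rpow_one, div_eq_mul_inv]
  rw [renyiEntropy, hW, Real.log_rpow ha, ← mul_assoc,
    one_div_mul_cancel (sub_ne_zero.2 ht.symm), one_mul]

end RenyiEntropy

theorem lmc_renyi_lower_bound_general (ρ : ℝ → ℝ) (hmeas : Measurable ρ)
    (hnn : ∀ x, 0 ≤ ρ x) (htot : (∫ x, ρ x) = 1)
    (p q : ℝ) (hpq : p < q) (hp : p ≠ 1) (hq : q ≠ 1)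
    (hWp : IntegrableOn (fun x => ρ x ^ p) (Function.support ρ))
    (hWq : IntegrableOn (fun x => ρ x ^ q) (Function.support ρ)) :
    ((1 / (1 - q)) * Real.log (∫ x in Function.support ρ, ρ x ^ q)
        ≤ (1 / (1 - p)) * Real.log (∫ x in Function.support ρ, ρ x ^ p)
      ∧ 1 ≤ Real.exp ((1 / (1 - p)) * Real.log (∫ x in Function.support ρ, ρ x ^ p)
          - (1 / (1 - q)) * Real.log (∫ x in Function.support ρ, ρ x ^ q)))
    ∧ (∀ a x₀ : ℝ, 0 < a →
        ρ =ᵐ[volume] (Set.Ioo x₀ (x₀ + a)).indicator (fun _ => 1 / a) →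
        Real.exp ((1 / (1 - p)) * Real.log (∫ x in Function.support ρ, ρ x ^ p)
            - (1 / (1 - q)) * Real.log (∫ x in Function.support ρ, ρ x ^ q)) = 1) := by
  have hpos : ∀ᵐ x ∂volume.restrict (Function.support ρ), 0 < ρ x :=
    ae_restrict_of_forall_mem (measurableSet_support hmeas) fun x hx => (hnn x).lt_of_ne' hx
  have hnorm : ∫ x in Function.support ρ, ρ x = 1 := by
    rw [setIntegral_eq_integral_of_forall_compl_eq_zero fun x hx => Function.notMem_support.1 hx,
      htot]
  have hR : renyiEntropy (volume.restrict (Function.support ρ)) ρ q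
      ≤ renyiEntropy (volume.restrict (Function.support ρ)) ρ p :=
    renyiEntropy_le_of_le hpos hnorm hp hq hpq.le hWp hWq
  refine ⟨⟨hR, Real.one_le_exp (sub_nonneg.2 hR)⟩, fun a x₀ ha hρ => ?_⟩
  have hRp := renyiEntropy_uniform ha hρ hp
  have hRq := renyiEntropy_uniform ha hρ hq
  rw [renyiEntropy] at hRp hRq
  rw [hRp, hRq, sub_self, Real.exp_zero]

/-- **Lower bound of the LMC–Rényi complexity**: for a probability density `ρ` and
`p < q` (`p, q ≠ 1`) with `0 < W_p[ρ] < ∞` and `0 < W_q[ρ] < ∞` (entropic moments taken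
over the support of `ρ`), one has `R_p[ρ] ≥ R_q[ρ]`, equivalently
`C_{p,q}[ρ] = exp(R_p[ρ] − R_q[ρ]) ≥ 1`; and if `ρ` is a uniform density (a.e. equal to
`1/a` on an interval of length `a > 0` and `0` outside) then `C_{p,q}[ρ] = 1`. -/
theorem lmc_renyi_lower_bound (ρ : ℝ → ℝ) (hmeas : Measurable ρ)
    (hnn : ∀ x, 0 ≤ ρ x) (htot : (∫ x, ρ x) = 1)
    (p q : ℝ) (hpq : p < q) (hp : p ≠ 1) (hq : q ≠ 1)
    (hWp : IntegrableOn (fun x => ρ x ^ p) (Function.support ρ))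
    (hWppos : 0 < ∫ x in Function.support ρ, ρ x ^ p)
    (hWq : IntegrableOn (fun x => ρ x ^ q) (Function.support ρ))
    (hWqpos : 0 < ∫ x in Function.support ρ, ρ x ^ q) :
    ((1 / (1 - q)) * Real.log (∫ x in Function.support ρ, ρ x ^ q)
        ≤ (1 / (1 - p)) * Real.log (∫ x in Function.support ρ, ρ x ^ p)
      ∧ 1 ≤ Real.exp ((1 / (1 - p)) * Real.log (∫ x in Function.support ρ, ρ x ^ p)
          - (1 / (1 - q)) * Real.log (∫ x in Function.support ρ, ρ x ^ q)))
    ∧ (∀ a x₀ : ℝ, 0 < a →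
        ρ =ᵐ[volume] (Set.Ioo x₀ (x₀ + a)).indicator (fun _ => 1 / a) →
        Real.exp ((1 / (1 - p)) * Real.log (∫ x in Function.support ρ, ρ x ^ p)
            - (1 / (1 - q)) * Real.log (∫ x in Function.support ρ, ρ x ^ q)) = 1) :=
  lmc_renyi_lower_bound_general ρ hmeas hnn htot p q hpq hp hq hWp hWq
end

section
/- Critical exponential decay of the differential-escort transform of an exact power-law tail (Lemma 1, critical case): let ρ : [0,∞) → ℝ be a continuous, strictly positive probability density with ρ(x) = c·x^{−β} for all x ≥ a, where a > 0, c > 0, β > 1, and let α = (β−1)/β. Then for all x ≥ a the change of variable satisfies y_α(x) = y_α(a) + c^{1/β} log(x/a), the transformed support is all of [0,∞) (i.e. ∫₀^∞ ρ^{1−α} = ∞), and for u ≥ y_α(a) the differential-escort density is exactly exponential: ρ_α(u) = c^{(β−1)/β} a^{−(β−1)} exp(−(β−1)(u − y_α(a))/c^{1/β}). -/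
open MeasureTheory Set

/-- The change of variable `y_α(x) = ∫₀ˣ σ(t)^{1-α} dt` of the differential-escort
transformation. -/
noncomputable def yOf (σ : ℝ → ℝ) (α x : ℝ) : ℝ := ∫ t in (0:ℝ)..x, σ t ^ (1 - α)

/-- The differential-escort density `𝔈_α[σ](u) = σ(x_α(u))^α` on `Λ_α = y_α '' Λ`,
extended by `0` outside, where `x_α` is the inverse of `y_α` on `Λ`. -/
noncomputable def escortOf (σ : ℝ → ℝ) (Λ : Set ℝ) (α : ℝ) : ℝ → ℝ :=
  (yOf σ α '' Λ).indicator fun u => σ (Function.invFunOn (yOf σ α) Λ u) ^ α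

/-! On the tail `ρ^{1-α} = (c x^{-β})^{1/β} = c^{1/β} / x`, so `y_α` grows like `c^{1/β} log x`;
this gives the logarithmic formula, and since `1/x` is not integrable at infinity,
`∫ ρ^{1-α} = ∞`. Inverting the logarithm, `x_α(u) = a exp ((u - y_α(a)) / c^{1/β})` for
`u ≥ y_α(a)`, and `ρ_α(u) = (c x_α(u)^{-β})^α = c^α x_α(u)^{-(β-1)}` is exponential in `u`. -/

theorem lintegral_ofReal_const_mul_inv_Ioi_eq_top {a k : ℝ} (ha : 0 ≤ a) (hk : 0 < k) :
    ∫⁻ t in Ioi a, ENNReal.ofReal (k * t⁻¹) = ⊤ := by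
  by_contra h
  have hnonneg : 0 ≤ᵐ[volume.restrict (Ioi a)] fun t : ℝ => k * t⁻¹ := by
    filter_upwards [ae_restrict_mem measurableSet_Ioi] with t ht
    exact mul_nonneg hk.le (inv_nonneg.2 (ha.trans ht.le))
  have hint := (lintegral_ofReal_ne_top_iff_integrable
    (measurable_inv.const_mul k).aestronglyMeasurable hnonneg).1 h
  exact not_integrableOn_Ioi_inv ((integrable_const_mul_iff hk.ne'.isUnit _).1 hint)

theorem rpow_one_div_const_mul_rpow_neg {c t β : ℝ} (hc : 0 ≤ c) (ht : 0 < t) (hβ : β ≠ 0) :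
    (c * t ^ (-β)) ^ (1 / β) = c ^ (1 / β) * t⁻¹ := by
  rw [Real.mul_rpow hc (Real.rpow_nonneg ht.le _), ← Real.rpow_mul ht.le,
    show -β * (1 / β) = -1 by field_simp, Real.rpow_neg_one]

section Escort

variable {σ : ℝ → ℝ} {α : ℝ}

theorem intervalIntegrable_rpow_of_continuousOn_Ici (hσ : ContinuousOn σ (Ici 0))
    (hσpos : ∀ x, 0 ≤ x → 0 < σ x) {p q : ℝ} (hp : 0 ≤ p) (hq : 0 ≤ q) :
    IntervalIntegrable (fun t => σ t ^ (1 - α)) volume p q :=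
  ((hσ.rpow_const fun x hx => Or.inl (hσpos x hx).ne').mono
    (ordConnected_Ici.uIcc_subset hp hq)).intervalIntegrable

theorem yOf_add_intervalIntegral (hσ : ContinuousOn σ (Ici 0)) (hσpos : ∀ x, 0 ≤ x → 0 < σ x)
    {x y : ℝ} (hx : 0 ≤ x) (hy : 0 ≤ y) :
    yOf σ α x + ∫ t in x..y, σ t ^ (1 - α) = yOf σ α y :=
  intervalIntegral.integral_add_adjacent_intervals
    (intervalIntegrable_rpow_of_continuousOn_Ici hσ hσpos le_rfl hx)
    (intervalIntegrable_rpow_of_continuousOn_Ici hσ hσpos hx hy)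

theorem strictMonoOn_yOf (hσ : ContinuousOn σ (Ici 0)) (hσpos : ∀ x, 0 ≤ x → 0 < σ x) :
    StrictMonoOn (yOf σ α) (Ici 0) := by
  intro x hx y hy hxy
  have hincr : 0 < ∫ t in x..y, σ t ^ (1 - α) :=
    intervalIntegral.intervalIntegral_pos_of_pos_on
      (intervalIntegrable_rpow_of_continuousOn_Ici hσ hσpos hx hy)
      (fun t ht => Real.rpow_pos_of_pos (hσpos t (hx.trans ht.1.le)) _) hxy
  linarith [yOf_add_intervalIntegral (α := α) hσ hσpos hx hy]

theorem escortOf_yOf {Λ : Set ℝ} (hinj : InjOn (yOf σ α) Λ) {x : ℝ} (hx : x ∈ Λ) :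
    escortOf σ Λ α (yOf σ α x) = σ x ^ α := by
  rw [escortOf, indicator_of_mem (mem_image_of_mem _ hx), hinj.leftInvOn_invFunOn hx]

variable {a k : ℝ}

theorem yOf_eq_add_mul_log (hσ : ContinuousOn σ (Ici 0)) (hσpos : ∀ x, 0 ≤ x → 0 < σ x)
    (ha : 0 < a) (htail : ∀ t, a ≤ t → σ t ^ (1 - α) = k * t⁻¹) {x : ℝ} (hx : a ≤ x) :
    yOf σ α x = yOf σ α a + k * Real.log (x / a) := by
  rw [← yOf_add_intervalIntegral hσ hσpos ha.le (ha.le.trans hx),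
    intervalIntegral.integral_congr (g := fun t => k * t⁻¹) fun t ht => htail t (by
      rw [uIcc_of_le hx] at ht; exact ht.1),
    intervalIntegral.integral_const_mul, integral_inv]
  rw [uIcc_of_le hx]
  exact fun h0 => (not_le.2 ha) h0.1

theorem yOf_mul_exp (hσ : ContinuousOn σ (Ici 0)) (hσpos : ∀ x, 0 ≤ x → 0 < σ x)
    (ha : 0 < a) (htail : ∀ t, a ≤ t → σ t ^ (1 - α) = k * t⁻¹) {s : ℝ} (hs : 0 ≤ s) :
    yOf σ α (a * Real.exp s) = yOf σ α a + k * s := by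
  rw [yOf_eq_add_mul_log hσ hσpos ha htail, mul_div_cancel_left₀ _ ha.ne', Real.log_exp]
  exact le_mul_of_one_le_right ha.le (Real.one_le_exp hs)

theorem escortOf_eq_of_yOf_le (hσ : ContinuousOn σ (Ici 0)) (hσpos : ∀ x, 0 ≤ x → 0 < σ x)
    (ha : 0 < a) (hk : 0 < k) (htail : ∀ t, a ≤ t → σ t ^ (1 - α) = k * t⁻¹) {u : ℝ}
    (hu : yOf σ α a ≤ u) :
    escortOf σ (Ioi 0) α u = σ (a * Real.exp ((u - yOf σ α a) / k)) ^ α := by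
  set s := (u - yOf σ α a) / k
  have hyOf : yOf σ α (a * Real.exp s) = u := by
    rw [yOf_mul_exp hσ hσpos ha htail (div_nonneg (sub_nonneg.2 hu) hk.le),
      mul_div_cancel₀ _ hk.ne', add_sub_cancel]
  rw [← hyOf, escortOf_yOf ((strictMonoOn_yOf hσ hσpos).injOn.mono Ioi_subset_Ici_self)
    (mul_pos ha (Real.exp_pos s))]

end Escort

theorem mul_exp_rpow {a : ℝ} (ha : 0 ≤ a) (s r : ℝ) :
    (a * Real.exp s) ^ r = a ^ r * Real.exp (r * s) := by
  rw [Real.mul_rpow ha (Real.exp_pos s).le, ← Real.exp_mul, mul_comm s]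

theorem powerlaw_escort_critical_general (ρ : ℝ → ℝ)
    (hcont : ContinuousOn ρ (Set.Ici 0)) (hpos : ∀ x : ℝ, 0 ≤ x → 0 < ρ x)
    (a c β : ℝ) (ha : 0 < a) (hc : 0 < c) (hβ : 1 < β)
    (htail : ∀ x : ℝ, a ≤ x → ρ x = c * x ^ (-β))
    (α : ℝ) (hα : α = (β - 1) / β) :
    (∀ x : ℝ, a ≤ x → yOf ρ α x = yOf ρ α a + c ^ (1 / β) * Real.log (x / a))
    ∧ (∫⁻ x in Set.Ioi (0:ℝ), ENNReal.ofReal (ρ x ^ (1 - α))) = ⊤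
    ∧ (∀ u : ℝ, yOf ρ α a ≤ u →
        escortOf ρ (Set.Ioi 0) α u
          = c ^ ((β - 1) / β) * a ^ (-(β - 1))
              * Real.exp (-((β - 1) * (u - yOf ρ α a) / c ^ (1 / β)))) := by
  have hβ0 : β ≠ 0 := (zero_lt_one.trans hβ).ne'
  have hk : 0 < c ^ (1 / β) := Real.rpow_pos_of_pos hc _
  have htail_rpow : ∀ t, a ≤ t → ρ t ^ (1 - α) = c ^ (1 / β) * t⁻¹ := fun t ht => by
    rw [htail t ht, show 1 - α = 1 / β by rw [hα]; field_simp; ring,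
      rpow_one_div_const_mul_rpow_neg hc.le (ha.trans_le ht) hβ0]
  refine ⟨fun x hx => yOf_eq_add_mul_log hcont hpos ha htail_rpow hx, ?_, fun u hu => ?_⟩
  · refine eq_top_mono (lintegral_mono_set (Ioi_subset_Ioi ha.le)) ?_
    rw [setLIntegral_congr_fun measurableSet_Ioi fun t ht => by rw [htail_rpow t (le_of_lt ht)]]
    exact lintegral_ofReal_const_mul_inv_Ioi_eq_top ha.le hk
  · have hx : a ≤ a * Real.exp ((u - yOf ρ α a) / c ^ (1 / β)) :=
      le_mul_of_one_le_right ha.le (Real.one_le_exp (div_nonneg (sub_nonneg.2 hu) hk.le))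
    rw [escortOf_eq_of_yOf_le hcont hpos ha hk htail_rpow hu, htail _ hx,
      Real.mul_rpow hc.le (Real.rpow_nonneg (ha.le.trans hx) _),
      ← Real.rpow_mul (ha.le.trans hx), mul_exp_rpow ha.le, hα,
      show -β * ((β - 1) / β) = -(β - 1) by field_simp, ← mul_assoc, neg_mul, mul_div_assoc]

/-- **Critical exponential decay of the differential-escort transform of an exact
power-law tail** (Lemma 1, critical case): let `ρ` be a continuous, strictly positive
probability density on `[0,∞)` with `ρ(x) = c·x^{-β}` for `x ≥ a` (`a, c > 0`, `β > 1`),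
and let `α = (β-1)/β`.  Then `y_α(x) = y_α(a) + c^{1/β} log(x/a)` for `x ≥ a`, the
transformed support is all of `[0,∞)` (i.e. `∫₀^∞ ρ^{1-α} = ∞`), and for `u ≥ y_α(a)`
the differential-escort density is exactly exponential:
`ρ_α(u) = c^{(β-1)/β} a^{-(β-1)} exp(−(β-1)(u − y_α(a))/c^{1/β})`. -/
theorem powerlaw_escort_critical (ρ : ℝ → ℝ)
    (hcont : ContinuousOn ρ (Set.Ici 0)) (hpos : ∀ x : ℝ, 0 ≤ x → 0 < ρ x)
    (htot : (∫ x in Set.Ioi (0:ℝ), ρ x) = 1)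
    (a c β : ℝ) (ha : 0 < a) (hc : 0 < c) (hβ : 1 < β)
    (htail : ∀ x : ℝ, a ≤ x → ρ x = c * x ^ (-β))
    (α : ℝ) (hα : α = (β - 1) / β) :
    (∀ x : ℝ, a ≤ x → yOf ρ α x = yOf ρ α a + c ^ (1 / β) * Real.log (x / a))
    ∧ (∫⁻ x in Set.Ioi (0:ℝ), ENNReal.ofReal (ρ x ^ (1 - α))) = ⊤
    ∧ (∀ u : ℝ, yOf ρ α a ≤ u →
        escortOf ρ (Set.Ioi 0) α u
          = c ^ ((β - 1) / β) * a ^ (-(β - 1))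
              * Real.exp (-((β - 1) * (u - yOf ρ α a) / c ^ (1 / β)))) :=
  powerlaw_escort_critical_general ρ hcont hpos a c β ha hc hβ htail α hα
end
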